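/- arXiv:2111.00819 — 4 statements merged into one kernel-verified Lean document; each statement's English description precedes it below -/
import Mathlib

section
/- Let M ⊆ S = K[x,y] be a monomial ideal of finite colength (for a grading by coprime positive integers a, b). For every k ≥ 1 and every ℓ ≥ 1, there is at most one direct path from m_k of length ℓ. -/
/-!
Combinatorial framework for monomial ideals in `K[x,y]`, graded by
`deg x = a`, `deg y = b`.  A monomial `x^α y^β` is represented by the
pair `(α, β) : ℤ × ℤ`; it lies in `S = K[x,y]` when both entries are
nonnegative.
-/

namespace MonId

/-- A (Laurent) monomial `x^α y^β`, represented by its exponent vector. -/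
abbrev Mon : Type := ℤ × ℤ

/-- `p` is a genuine monomial of `S = K[x,y]` (nonnegative exponents). -/
def inS (p : Mon) : Prop := 0 ≤ p.1 ∧ 0 ≤ p.2

/-- `M` is (the set of monomials of) a monomial ideal of `S` of finite
colength: it consists of monomials of `S`, is closed under multiplication
by `x` and by `y`, and its complement in the monomials of `S` is finite. -/
def IsMonIdeal (M : Set Mon) : Prop :=
  (∀ p ∈ M, inS p) ∧
  (∀ p ∈ M, (p.1 + 1, p.2) ∈ M ∧ (p.1, p.2 + 1) ∈ M) ∧
  {p : Mon | inS p ∧ p ∉ M}.Finite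

/-- `p` is a minimal monomial generator of the monomial ideal `M`. -/
def IsMinGen (M : Set Mon) (p : Mon) : Prop :=
  p ∈ M ∧ (p.1 - 1, p.2) ∉ M ∧ (p.1, p.2 - 1) ∉ M

/-- `m 0, m 1, …, m e` is the list of minimal generators of `M`, in
increasing lexicographic order `≺` with `x ≺ y` (equivalently, with
strictly increasing `y`-exponents). -/
def IsGenSeq (M : Set Mon) (e : ℕ) (m : ℕ → Mon) : Prop :=
  (∀ k ≤ e, IsMinGen M (m k)) ∧
  (∀ k, k < e → (m k).2 < (m (k + 1)).2) ∧
  (∀ p, IsMinGen M p → ∃ k ≤ e, m k = p)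

/-- Multiplication of the monomial `p` by `r^ℓ`, where `r = x^b y^{-a}`. -/
def rpow (a b ℓ : ℤ) (p : Mon) : Mon := (p.1 + b * ℓ, p.2 - a * ℓ)

/-- `w m i` is `w_i = lcm(m_{i-1}, m_i)` (componentwise max of exponents). -/
def w (m : ℕ → Mon) (i : ℕ) : Mon :=
  (max (m (i - 1)).1 (m i).1, max (m (i - 1)).2 (m i).2)

/-- The set `T⁺(M)` of positive significant arrows `(i, ℓ)`:
`1 ≤ i ≤ e`, `ℓ ≥ 1`, `m_i r^ℓ ∈ S ∖ M` and `w_i r^ℓ ∈ M`. -/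
def Tplus (a b : ℤ) (M : Set Mon) (e : ℕ) (m : ℕ → Mon) : Set (ℕ × ℤ) :=
  {q | 1 ≤ q.1 ∧ q.1 ≤ e ∧ 1 ≤ q.2 ∧ inS (rpow a b q.2 (m q.1)) ∧
    rpow a b q.2 (m q.1) ∉ M ∧ rpow a b q.2 (w m q.1) ∈ M}

/-- The set `T⁻(M)` of negative significant arrows `(i, ℓ)`:
`0 ≤ i ≤ e - 1`, `ℓ ≤ -1`, `m_i r^ℓ ∈ S ∖ M` and `w_{i+1} r^ℓ ∈ M`. -/
def Tminus (a b : ℤ) (M : Set Mon) (e : ℕ) (m : ℕ → Mon) : Set (ℕ × ℤ) :=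
  {q | q.1 < e ∧ q.2 ≤ -1 ∧ inS (rpow a b q.2 (m q.1)) ∧
    rpow a b q.2 (m q.1) ∉ M ∧ rpow a b q.2 (w m (q.1 + 1)) ∈ M}

/-- `j⁺(p) = max {i : m_i divides p}`. -/
def jplus (e : ℕ) (m : ℕ → Mon) (p : Mon) : ℕ :=
  Nat.findGreatest (fun i => (m i).1 ≤ p.1 ∧ (m i).2 ≤ p.2) e

/-- `j⁻(p) = min {i : m_i divides p}`. -/
noncomputable def jminus (e : ℕ) (m : ℕ → Mon) (p : Mon) : ℕ :=
  sInf {i | i ≤ e ∧ (m i).1 ≤ p.1 ∧ (m i).2 ≤ p.2}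

/-- `IsPath a b M e m i P`: `P` is a path from the generator `m_i`, i.e. a
finite sequence of positive significant arrows whose first arrow `(i₁, ℓ₁)`
has `i₁ ≤ i`, and whose tail is a path from `m_{j⁺(w_{i₁} r^{ℓ₁})}`.
The empty sequence is a path from every generator. -/
def IsPath (a b : ℤ) (M : Set Mon) (e : ℕ) (m : ℕ → Mon) : ℕ → List (ℕ × ℤ) → Prop
  | _, [] => True
  | i, q :: rest => q ∈ Tplus a b M e m ∧ q.1 ≤ i ∧
      IsPath a b M e m (jplus e m (rpow a b q.2 (w m q.1))) rest

/-- The length `l(P) = ℓ₁ + ⋯ + ℓ_s` of a path. -/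
def llen (P : List (ℕ × ℤ)) : ℤ := (P.map Prod.snd).sum

/-- `lm j` is the largest `ℓ` with `(j, ℓ) ∈ T⁺(M)`, and is `0` when no
such arrow exists. -/
def IsLmax (Tp : Set (ℕ × ℤ)) (lm : ℕ → ℤ) : Prop :=
  ∀ j : ℕ, (∀ ℓ : ℤ, (j, ℓ) ∈ Tp → ℓ ≤ lm j) ∧
    ((∃ ℓ : ℤ, (j, ℓ) ∈ Tp) → (j, lm j) ∈ Tp) ∧
    ((¬ ∃ ℓ : ℤ, (j, ℓ) ∈ Tp) → lm j = 0)

/-- `IsZSeq a b e m lm k L`: `L` is the sequence `(z_1, z_2, …)` of arrows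
produced by the greedy procedure started at index `k`: while `i ≥ 1`, if
`ℓ_i > 0` record the arrow `(i, ℓ_i)` and jump to `j⁺(w_i r^{ℓ_i})`,
otherwise decrease `i` by one; stop when `i ≤ 0`. -/
inductive IsZSeq (a b : ℤ) (e : ℕ) (m : ℕ → Mon) (lm : ℕ → ℤ) : ℕ → List (ℕ × ℤ) → Prop where
  | zero : IsZSeq a b e m lm 0 []
  | skip {i : ℕ} {L : List (ℕ × ℤ)} : 1 ≤ i → lm i ≤ 0 →
      IsZSeq a b e m lm (i - 1) L → IsZSeq a b e m lm i L
  | step {i : ℕ} {L : List (ℕ × ℤ)} : 1 ≤ i → 0 < lm i →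
      IsZSeq a b e m lm (jplus e m (rpow a b (lm i) (w m i))) L →
      IsZSeq a b e m lm i ((i, lm i) :: L)

/-- `D` is a direct path from `m_k`: a path which is either a nonempty
initial segment `(z_1, …, z_s)` of the greedy sequence from `k`, or
`(z_1, …, z_s, (i', ℓ'))` where `i'` is the index of `z_{s+1}` and
`1 ≤ ℓ' < ℓ_{i'}`. -/
def IsDirectPath (a b : ℤ) (M : Set Mon) (e : ℕ) (m : ℕ → Mon) (lm : ℕ → ℤ)
    (k : ℕ) (D : List (ℕ × ℤ)) : Prop :=
  IsPath a b M e m k D ∧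
  ∃ L, IsZSeq a b e m lm k L ∧
    ((∃ s : ℕ, 0 < s ∧ s ≤ L.length ∧ D = L.take s) ∨
     (∃ (s : ℕ) (z : ℕ × ℤ) (ℓ' : ℤ), L[s]? = some z ∧ 1 ≤ ℓ' ∧ ℓ' < z.2 ∧
       D = L.take s ++ [(z.1, ℓ')]))

/-- The monomial `c_P = c_{i₁}^{ℓ₁} ⋯ c_{i_s}^{ℓ_s}` associated to a path,
as an element of the polynomial ring with variables `c_i^ℓ` (indexed by
pairs `(i, ℓ)`). -/
noncomputable def cP (K : Type*) [CommSemiring K] (P : List (ℕ × ℤ)) : MvPolynomial (ℕ × ℤ) K :=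
  (P.map MvPolynomial.X).prod

end MonId

open MonId

/-!
The greedy sequence from `m_k` is uniquely determined and all its arrows have positive length,
so the lengths of its prefixes strictly increase. A direct path is such a prefix followed by a
nonempty part of the next arrow, so its length lies strictly between the lengths of two
consecutive prefixes; this pins down both the prefix and the final arrow.
-/

namespace MonId

variable {a b : ℤ} {e : ℕ} {m : ℕ → Mon} {lm : ℕ → ℤ}

theorem IsZSeq.unique {i : ℕ} {L L' : List (ℕ × ℤ)} (h : IsZSeq a b e m lm i L)
    (h' : IsZSeq a b e m lm i L') : L = L' := by
  induction h generalizing L' with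
  | zero => cases h' <;> first | rfl | omega
  | skip _ _ _ ih => cases h' <;> first | exact ih ‹_› | omega
  | step _ _ _ ih => cases h' <;> first | omega | rw [ih ‹_›]

theorem IsZSeq.snd_pos {i : ℕ} {L : List (ℕ × ℤ)} (h : IsZSeq a b e m lm i L) :
    ∀ q ∈ L, 0 < q.2 := by
  induction h with
  | zero => simp
  | skip _ _ _ ih => exact ih
  | step _ hpos _ ih => simpa [hpos] using ih

@[simp]
theorem llen_append (A B : List (ℕ × ℤ)) : llen (A ++ B) = llen A + llen B := by
  simp [llen]

@[simp]
theorem llen_singleton (q : ℕ × ℤ) : llen [q] = q.2 := by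
  simp [llen]

theorem llen_take_succ {L : List (ℕ × ℤ)} {s : ℕ} {z : ℕ × ℤ} (hz : L[s]? = some z) :
    llen (L.take (s + 1)) = llen (L.take s) + z.2 := by
  simp [List.take_add_one, hz]

theorem llen_take_mono {L : List (ℕ × ℤ)} (hnn : ∀ q ∈ L, 0 ≤ q.2) {s t : ℕ} (hst : s ≤ t) :
    llen (L.take s) ≤ llen (L.take t) := by
  obtain ⟨n, rfl⟩ := Nat.exists_eq_add_of_le hst
  have htail : 0 ≤ llen ((L.drop s).take n) :=
    List.sum_nonneg fun x hx => by
      obtain ⟨q, hq, rfl⟩ := List.mem_map.1 hx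
      exact hnn q (List.mem_of_mem_drop (List.mem_of_mem_take hq))
  rw [List.take_add, llen_append]
  linarith

theorem llen_take_add_le_of_lt {L : List (ℕ × ℤ)} (hnn : ∀ q ∈ L, 0 ≤ q.2) {s t : ℕ}
    {z : ℕ × ℤ} (hz : L[s]? = some z) {c : ℤ} (hc : c ≤ z.2) (hst : s < t) :
    llen (L.take s) + c ≤ llen (L.take t) := by
  have := llen_take_mono hnn hst
  rw [llen_take_succ hz] at this
  linarith

theorem take_append_eq_of_llen_eq {L : List (ℕ × ℤ)} (hpos : ∀ q ∈ L, 0 < q.2) {s t : ℕ}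
    {z z' : ℕ × ℤ} (hz : L[s]? = some z) (hz' : L[t]? = some z') {c c' : ℤ}
    (hc : 0 < c) (hcz : c ≤ z.2) (hc' : 0 < c') (hcz' : c' ≤ z'.2)
    (hlen : llen (L.take s ++ [(z.1, c)]) = llen (L.take t ++ [(z'.1, c')])) :
    L.take s ++ [(z.1, c)] = L.take t ++ [(z'.1, c')] := by
  have hnn : ∀ q ∈ L, 0 ≤ q.2 := fun q hq => (hpos q hq).le
  simp only [llen_append, llen_singleton] at hlen
  obtain hst | rfl | hts := lt_trichotomy s t
  · linarith [llen_take_add_le_of_lt hnn hz hcz hst]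
  · obtain rfl : z = z' := Option.some.inj (hz.symm.trans hz')
    obtain rfl : c = c' := by linarith
    rfl
  · linarith [llen_take_add_le_of_lt hnn hz' hcz' hts]

/-- Writing `(z_1, …, z_s)` as `(z_1, …, z_{s-1}, z_s)`, both kinds of direct path become a prefix
of the greedy sequence followed by an arrow `(i', ℓ')` with `1 ≤ ℓ' ≤ ℓ_{i'}`. -/
theorem IsDirectPath.exists_take_append {M : Set Mon} {k : ℕ} {D : List (ℕ × ℤ)}
    (hD : IsDirectPath a b M e m lm k D) :
    ∃ L, IsZSeq a b e m lm k L ∧ ∃ (s : ℕ) (z : ℕ × ℤ) (c : ℤ),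
      L[s]? = some z ∧ 0 < c ∧ c ≤ z.2 ∧ D = L.take s ++ [(z.1, c)] := by
  obtain ⟨-, L, hL, ⟨s, hs0, hsL, rfl⟩ | ⟨s, z, c, hz, hc, hcz, rfl⟩⟩ := hD
  · obtain ⟨s, rfl⟩ : ∃ t, s = t + 1 := ⟨s - 1, by omega⟩
    have hz : L[s]? = some L[s] := List.getElem?_eq_getElem (by omega)
    refine ⟨L, hL, s, L[s], L[s].2, hz, hL.snd_pos _ (List.getElem_mem _), le_rfl, ?_⟩
    rw [List.take_add_one, hz]
    rfl
  · exact ⟨L, hL, s, z, c, hz, hc, hcz.le, rfl⟩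

end MonId

theorem directPath_unique_general
    (a b : ℤ)
    (M : Set Mon) (e : ℕ) (m : ℕ → Mon)
    (lm : ℕ → ℤ)
    (k : ℕ) (ℓ : ℤ)
    (P P' : List (ℕ × ℤ))
    (hP : IsDirectPath a b M e m lm k P) (hPl : llen P = ℓ)
    (hP' : IsDirectPath a b M e m lm k P') (hP'l : llen P' = ℓ) :
    P = P' := by
  obtain ⟨L, hL, s, z, c, hz, hc, hcz, rfl⟩ := hP.exists_take_append
  obtain ⟨L', hL', t, z', c', hz', hc', hcz', rfl⟩ := hP'.exists_take_append
  obtain rfl := hL.unique hL'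
  exact take_append_eq_of_llen_eq hL.snd_pos hz hz' hc hcz hc' hcz' (hPl.trans hP'l.symm)

/-- Remark `rem:PropertiesOfDirectPaths` (1).  For a
monomial ideal `M ⊆ K[x,y]` of finite colength, graded by coprime positive
integers `a, b`, and any minimal generator `m_k` with `k ≥ 1`, there is at
most one direct path from `m_k` of a given length `ℓ ≥ 1`. -/
theorem directPath_unique
    (a b : ℤ) (ha : 1 ≤ a) (hb : 1 ≤ b) (hab : IsCoprime a b)
    (M : Set Mon) (hM : IsMonIdeal M) (e : ℕ) (m : ℕ → Mon)
    (hg : IsGenSeq M e m)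
    (lm : ℕ → ℤ) (hlm : IsLmax (Tplus a b M e m) lm)
    (k : ℕ) (hk1 : 1 ≤ k) (hke : k ≤ e) (ℓ : ℤ) (hℓ : 1 ≤ ℓ)
    (P P' : List (ℕ × ℤ))
    (hP : IsDirectPath a b M e m lm k P) (hPl : llen P = ℓ)
    (hP' : IsDirectPath a b M e m lm k P') (hP'l : llen P' = ℓ) :
    P = P' :=
  directPath_unique_general a b M e m lm k ℓ P P' hP hPl hP' hP'l
end

section
/- Let M ⊆ S = K[x,y] be a monomial ideal of finite colength (for a grading by coprime positive integers a, b). Fix k ≥ 1 and a positive significant arrow (i, ℓ') ∈ T⁺(M). Then there is at most one ℓ ≥ 1 such that a direct path p_{k,ℓ} from m_k of length ℓ exists in which (i, ℓ') is the last step, in the sense that every other arrow (i'', ℓ'') appearing in p_{k,ℓ} satisfies i'' > i. -/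
open MonId

/-!
The greedy sequence `z_1, z_2, …` from `m_k` is uniquely determined, and its indices strictly
decrease, because a jump `i ↦ j⁺(w_i r^ℓ)` with `ℓ ≥ 1` lowers the `y`-exponent below that of
`m_i`. Every direct path has the shape `(z_1, …, z_s, (i_{s+1}, c))`, so if `(i, ℓ')` is its last
step then `i` is the index of `z_{s+1}`, which pins down `s`, and `c = ℓ'`. Hence the path, and
with it its length, is determined by `k` and `(i, ℓ')`.
-/

namespace MonId

def IsLastStep {α β : Type*} [Preorder α] (x : α × β) (D : List (α × β)) : Prop :=
  x ∈ D ∧ ∀ q ∈ D, q ≠ x → x.1 < q.1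

section LastStep

variable {α β : Type*} [Preorder α] {L : List (α × β)}

theorem IsLastStep.eq_of_take_append (hL : L.Pairwise fun p q => q.1 < p.1) {s : ℕ}
    (hs : s < L.length) {c : β} {x : α × β} (h : IsLastStep x (L.take s ++ [(L[s].1, c)])) :
    (L[s].1, c) = x := by
  obtain ⟨hx, hlast⟩ := h
  rcases List.mem_append.1 hx with hx | hx
  · have hsx : L[s].1 < x.1 := by
      rw [← List.take_append_drop s L, List.pairwise_append] at hL
      exact hL.2.2 x hx L[s] (by rw [List.drop_eq_getElem_cons hs]; exact List.mem_cons_self ..)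
    have hxs := hlast (L[s].1, c) (by simp) fun h => (h ▸ hsx).false
    exact absurd hsx hxs.asymm
  · exact (List.mem_singleton.1 hx).symm

theorem eq_of_fst_getElem_eq (hL : L.Pairwise fun p q => q.1 < p.1) {s t : ℕ}
    (hs : s < L.length) (ht : t < L.length) (h : L[s].1 = L[t].1) : s = t := by
  have hnodup : (L.map Prod.fst).Nodup :=
    (List.pairwise_map (R := fun u v : α => v < u) |>.2 hL).imp fun h => h.ne'
  simpa using hnodup.getElem_inj_iff (hi := by simpa using hs) (hj := by simpa using ht)
    |>.1 (by simpa using h)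

theorem IsLastStep.take_append_unique (hL : L.Pairwise fun p q => q.1 < p.1) {s t : ℕ}
    (hs : s < L.length) (ht : t < L.length) {c d : β} {x : α × β}
    (hc : IsLastStep x (L.take s ++ [(L[s].1, c)]))
    (hd : IsLastStep x (L.take t ++ [(L[t].1, d)])) :
    L.take s ++ [(L[s].1, c)] = L.take t ++ [(L[t].1, d)] := by
  have hcx := hc.eq_of_take_append hL hs
  have hdx := hd.eq_of_take_append hL ht
  obtain rfl : s = t :=
    eq_of_fst_getElem_eq hL hs ht (by rw [congrArg Prod.fst hcx, congrArg Prod.fst hdx])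
  rw [hcx, hdx]

end LastStep

section Greedy

variable {a b : ℤ} {M : Set Mon} {e : ℕ} {m : ℕ → Mon} {lm : ℕ → ℤ}

theorem jplus_divides_of_ne_zero {p : Mon} (h : jplus e m p ≠ 0) :
    (m (jplus e m p)).1 ≤ p.1 ∧ (m (jplus e m p)).2 ≤ p.2 :=
  Nat.findGreatest_of_ne_zero rfl h

theorem jplus_rpow_w_lt (ha : 1 ≤ a) (hm : ∀ k, k < e → (m k).2 < (m (k + 1)).2) {i : ℕ}
    {ℓ : ℤ} (hi : 1 ≤ i) (hℓ : 0 < ℓ) : jplus e m (rpow a b ℓ (w m i)) < i := by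
  by_contra! hij
  set j := jplus e m (rpow a b ℓ (w m i))
  have hje : j ≤ e := Nat.findGreatest_le e
  have hdvd : (m j).2 ≤ (w m i).2 - a * ℓ := (jplus_divides_of_ne_zero (by omega)).2
  have hmono : MonotoneOn (fun k => (m k).2) (Set.Iic e) :=
    (strictMonoOn_Iic_of_lt_succ fun k hk => by simpa using hm k hk).monotoneOn
  have hwi : (w m i).2 = (m i).2 :=
    max_eq_right (hmono (by simp; omega) (by simp; omega) (by omega))
  have hij' : (m i).2 ≤ (m j).2 := hmono (by simp; omega) hje hij
  nlinarith

theorem IsZSeq.unique_s7 {k : ℕ} {L₁ L₂ : List (ℕ × ℤ)} (h₁ : IsZSeq a b e m lm k L₁)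
    (h₂ : IsZSeq a b e m lm k L₂) : L₁ = L₂ := by
  induction h₁ generalizing L₂ with
  | zero => cases h₂ <;> first | rfl | omega
  | skip _ hl _ ih => cases h₂ with
    | zero => omega
    | skip _ _ h => exact ih h
    | step _ hl' _ => omega
  | step _ hl _ ih => cases h₂ with
    | zero => omega
    | skip _ hl' _ => omega
    | step _ _ h => rw [ih h]

theorem IsZSeq.fst_le (ha : 1 ≤ a) (hm : ∀ k, k < e → (m k).2 < (m (k + 1)).2) {k : ℕ}
    {L : List (ℕ × ℤ)} (h : IsZSeq a b e m lm k L) : ∀ q ∈ L, q.1 ≤ k := by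
  induction h with
  | zero => simp
  | skip _ _ _ ih => exact fun q hq => (ih q hq).trans (Nat.sub_le _ _)
  | step hi hl _ ih =>
    rintro q (_ | ⟨_, hq⟩)
    · exact le_rfl
    · exact (ih q hq).trans (jplus_rpow_w_lt ha hm hi hl).le

theorem IsZSeq.pairwise_fst_gt (ha : 1 ≤ a) (hm : ∀ k, k < e → (m k).2 < (m (k + 1)).2)
    {k : ℕ} {L : List (ℕ × ℤ)} (h : IsZSeq a b e m lm k L) :
    L.Pairwise fun p q => q.1 < p.1 := by
  induction h with
  | zero => exact List.Pairwise.nil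
  | skip _ _ _ ih => exact ih
  | step hi hl hL ih =>
    exact ih.cons fun q hq => (hL.fst_le ha hm q hq).trans_lt (jplus_rpow_w_lt ha hm hi hl)

theorem IsDirectPath.exists_eq_take_append {k : ℕ} {D : List (ℕ × ℤ)}
    (hD : IsDirectPath a b M e m lm k D) :
    ∃ L, IsZSeq a b e m lm k L ∧
      ∃ (s : ℕ) (hs : s < L.length) (c : ℤ), D = L.take s ++ [(L[s].1, c)] := by
  obtain ⟨-, L, hL, ⟨s, hs0, hsL, rfl⟩ | ⟨s, z, c, hz, -, -, rfl⟩⟩ := hD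
  · obtain ⟨s, rfl⟩ : ∃ n, s = n + 1 := ⟨s - 1, by omega⟩
    have hs : s < L.length := by omega
    exact ⟨L, hL, s, hs, L[s].2, List.take_succ_eq_append_getElem hs⟩
  · obtain ⟨hs, rfl⟩ := List.getElem?_eq_some_iff.1 hz
    exact ⟨L, hL, s, hs, c, rfl⟩

end Greedy

end MonId

theorem directPath_lastStep_unique_length_general
    (a b : ℤ) (ha : 1 ≤ a) (M : Set Mon) (e : ℕ) (m : ℕ → Mon) (hg : IsGenSeq M e m)
    (lm : ℕ → ℤ) (k : ℕ) (i : ℕ) (ℓ' : ℤ) (ℓ₁ ℓ₂ : ℤ)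
    (h₁ : ∃ P : List (ℕ × ℤ), IsDirectPath a b M e m lm k P ∧ llen P = ℓ₁ ∧
      (i, ℓ') ∈ P ∧ ∀ q ∈ P, q ≠ (i, ℓ') → i < q.1)
    (h₂ : ∃ P : List (ℕ × ℤ), IsDirectPath a b M e m lm k P ∧ llen P = ℓ₂ ∧
      (i, ℓ') ∈ P ∧ ∀ q ∈ P, q ≠ (i, ℓ') → i < q.1) :
    ℓ₁ = ℓ₂ := by
  obtain ⟨P₁, hP₁, rfl, hlast₁⟩ := h₁
  obtain ⟨P₂, hP₂, rfl, hlast₂⟩ := h₂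
  obtain ⟨L, hL, s, hs, c, rfl⟩ := hP₁.exists_eq_take_append
  obtain ⟨L', hL', t, ht, d, rfl⟩ := hP₂.exists_eq_take_append
  obtain rfl := hL.unique_s7 hL'
  rw [IsLastStep.take_append_unique (hL.pairwise_fst_gt ha hg.2.1) hs ht hlast₁ hlast₂]

/-- Remark `rem:PropertiesOfDirectPaths` (2).  For a
fixed `k ≥ 1` and a fixed positive significant arrow `(i, ℓ')` of the
monomial ideal `M`, there is at most one `ℓ ≥ 1` such that there is a
direct path `p_{k,ℓ}` from `m_k` of length `ℓ` in which `(i, ℓ')` is the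
last step, in the sense that every other arrow `(i'', ℓ'')` appearing in
`p_{k,ℓ}` has `i'' > i`. -/
theorem directPath_lastStep_unique_length
    (a b : ℤ) (ha : 1 ≤ a) (hb : 1 ≤ b) (hab : IsCoprime a b)
    (M : Set Mon) (hM : IsMonIdeal M) (e : ℕ) (m : ℕ → Mon)
    (hg : IsGenSeq M e m)
    (lm : ℕ → ℤ) (hlm : IsLmax (Tplus a b M e m) lm)
    (k : ℕ) (hk1 : 1 ≤ k) (hke : k ≤ e)
    (i : ℕ) (ℓ' : ℤ) (harrow : (i, ℓ') ∈ Tplus a b M e m)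
    (ℓ₁ ℓ₂ : ℤ) (hℓ₁ : 1 ≤ ℓ₁) (hℓ₂ : 1 ≤ ℓ₂)
    (h₁ : ∃ P : List (ℕ × ℤ), IsDirectPath a b M e m lm k P ∧ llen P = ℓ₁ ∧
      (i, ℓ') ∈ P ∧ ∀ q ∈ P, q ≠ (i, ℓ') → i < q.1)
    (h₂ : ∃ P : List (ℕ × ℤ), IsDirectPath a b M e m lm k P ∧ llen P = ℓ₂ ∧
      (i, ℓ') ∈ P ∧ ∀ q ∈ P, q ≠ (i, ℓ') → i < q.1) :
    ℓ₁ = ℓ₂ :=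
  directPath_lastStep_unique_length_general a b ha M e m hg lm k i ℓ' ℓ₁ ℓ₂ h₁ h₂
end

section
/- Let M ⊆ S = K[x,y] be a monomial ideal of finite colength (for a grading by coprime positive integers a, b). Fix k ≥ 1 with ℓ_k ≥ 1, i.e. some arrow (k, ℓ) lies in T⁺(M), and let ℓ_k be the largest such ℓ. If P is a direct path from m_k of length ℓ > ℓ_k, then the sequence obtained from P by deleting its first step is a direct path from m_{j⁺(w_k r^{ℓ_k})} of length ℓ − ℓ_k. -/
open MonId

/-!
Since `ℓ_k > 0`, the greedy sequence from `m_k` is `(k, ℓ_k)` followed by the greedy sequence from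
`m_{j⁺(w_k r^{ℓ_k})}`. A direct path from `m_k` of length `> ℓ_k` is therefore not a single arrow,
so it is `(k, ℓ_k)` followed by a direct path from that generator.
-/

namespace MonId

variable {a b : ℤ} {M : Set Mon} {e : ℕ} {m : ℕ → Mon} {lm : ℕ → ℤ}

lemma llen_cons (q : ℕ × ℤ) (P : List (ℕ × ℤ)) : llen (q :: P) = q.2 + llen P := by
  simp [llen]

lemma IsZSeq.eq_cons_of_pos {k : ℕ} {L : List (ℕ × ℤ)} (h : IsZSeq a b e m lm k L)
    (hk : 1 ≤ k) (hpos : 0 < lm k) :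
    ∃ L', L = (k, lm k) :: L' ∧ IsZSeq a b e m lm (jplus e m (rpow a b (lm k) (w m k))) L' := by
  cases h with
  | zero => omega
  | skip _ hle _ => omega
  | step _ _ hL' => exact ⟨_, rfl, hL'⟩

lemma IsDirectPath.eq_singleton_or_cons {k : ℕ} {P : List (ℕ × ℤ)}
    (hP : IsDirectPath a b M e m lm k P) (hk : 1 ≤ k) (hpos : 0 < lm k) :
    (∃ ℓ' ≤ lm k, P = [(k, ℓ')]) ∨
      ∃ D, P = (k, lm k) :: D ∧
        IsDirectPath a b M e m lm (jplus e m (rpow a b (lm k) (w m k))) D := by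
  obtain ⟨hpath, L, hL, hcase⟩ := hP
  obtain ⟨L', rfl, hL'⟩ := hL.eq_cons_of_pos hk hpos
  rcases hcase with ⟨_ | _ | n, hs, hsle, rfl⟩ | ⟨_ | n, z, ℓ', hget, hℓ1, hℓ2, rfl⟩
  · omega
  · exact Or.inl ⟨lm k, le_rfl, rfl⟩
  · obtain ⟨-, -, htail⟩ := hpath
    exact Or.inr ⟨_, rfl, htail, L', hL', Or.inl ⟨n + 1, n.succ_pos, by simpa using hsle, rfl⟩⟩
  · obtain rfl : (k, lm k) = z := by simpa using hget
    exact Or.inl ⟨ℓ', hℓ2.le, rfl⟩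
  · obtain ⟨-, -, htail⟩ := hpath
    simp only [List.getElem?_cons_succ] at hget
    exact Or.inr ⟨_, rfl, htail, L', hL', Or.inr ⟨n, z, ℓ', hget, hℓ1, hℓ2, rfl⟩⟩

end MonId

theorem directPath_tail_general
    (a b : ℤ)
    (M : Set Mon) (e : ℕ) (m : ℕ → Mon)
    (lm : ℕ → ℤ)
    (k : ℕ) (hk1 : 1 ≤ k) (hlmk : 1 ≤ lm k)
    (P : List (ℕ × ℤ)) (hP : IsDirectPath a b M e m lm k P)
    (hlen : lm k < llen P) :
    IsDirectPath a b M e m lm (jplus e m (rpow a b (lm k) (w m k))) P.tail ∧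
      llen P.tail = llen P - lm k := by
  rcases hP.eq_singleton_or_cons hk1 hlmk with ⟨ℓ', hℓ', rfl⟩ | ⟨D, rfl, hD⟩
  · have hsingle : llen [(k, ℓ')] = ℓ' := by simp [llen]
    omega
  · exact ⟨hD, by rw [List.tail_cons, llen_cons]; ring⟩

/-- Remark `rem:PropertiesOfDirectPaths` (3).  If `P` is
a direct path from `m_k` of length `ℓ > ℓ_k` (where `ℓ_k ≥ 1` is the
longest length of an arrow `(k, ℓ) ∈ T⁺(M)`), then deleting the first
step of `P` yields a direct path from `m_{j⁺(w_k r^{ℓ_k})}` of length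
`ℓ - ℓ_k`. -/
theorem directPath_tail
    (a b : ℤ) (ha : 1 ≤ a) (hb : 1 ≤ b) (hab : IsCoprime a b)
    (M : Set Mon) (hM : IsMonIdeal M) (e : ℕ) (m : ℕ → Mon)
    (hg : IsGenSeq M e m)
    (lm : ℕ → ℤ) (hlm : IsLmax (Tplus a b M e m) lm)
    (k : ℕ) (hk1 : 1 ≤ k) (hke : k ≤ e) (hlmk : 1 ≤ lm k)
    (P : List (ℕ × ℤ)) (hP : IsDirectPath a b M e m lm k P)
    (hlen : lm k < llen P) :
    IsDirectPath a b M e m lm (jplus e m (rpow a b (lm k) (w m k))) P.tail ∧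
      llen P.tail = llen P - lm k :=
  directPath_tail_general a b M e m lm k hk1 hlmk P hP hlen
end

section
/- Give S = K[x,y] the standard grading (a = b = 1, r = x/y) and let M ⊆ S be a monomial ideal of finite colength with minimal generators m_0 ≺ m_1 ≺ ⋯ ≺ m_e, written m_k = x^{α_k} y^{β_k} (so α_0 > α_1 > ⋯ > α_e = 0 and 0 = β_0 < β_1 < ⋯ < β_e). Then T⁻(M) = ∅ if and only if β_k = k for all 0 ≤ k ≤ e; equivalently, the row lengths of the Young diagram of M are strictly decreasing, and equivalently w_k = y·m_{k−1} for all 1 ≤ k ≤ e. Dually, T⁺(M) = ∅ if and only if α_k = e − k for all 0 ≤ k ≤ e; equivalently, the column lengths of the Young diagram of M are strictly decreasing. -/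
open MonId

namespace MonId

/-- The length of row `β` of the Young diagram of `M`: the number of
monomials `x^α y^β ∉ M`. -/
noncomputable def rowLen (M : Set Mon) (β : ℕ) : ℕ :=
  Nat.card {α : ℤ // 0 ≤ α ∧ (α, (β : ℤ)) ∉ M}

/-- The length of column `α` of the Young diagram of `M`: the number of
monomials `x^α y^β ∉ M`. -/
noncomputable def colLen (M : Set Mon) (α : ℕ) : ℕ :=
  Nat.card {β : ℤ // 0 ≤ β ∧ ((α : ℤ), β) ∉ M}

end MonId


/-!
Everything reduces to the row structure of the staircase: a monomial in the row `y^β` lies in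
`M` iff it is divisible by the last generator `m_i` with `β_i ≤ β`. Consequently the rows
`β_i, …, β_{i+1} - 1` all have length `α_i`, so strictly decreasing row lengths,
`w_k = y m_{k-1}` and `β_k = k` all say that consecutive `β`'s differ by one. A gap
`β_{i+1} ≥ β_i + 2` produces the negative arrow `(i, -1)`, since `m_i r⁻¹ = x^{α_i - 1} y^{β_i + 1}`
lies in the gap row while `w_{i+1} r⁻¹` is a multiple of `m_{i+1}`; without gaps every `m_i r^ℓ`
with `ℓ < 0` is a multiple of `m_{i-ℓ}` (or of `m_e`). The statements about `T⁺` and columns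
follow by exchanging `x` and `y`, which reverses the order of the generators and turns `T⁺` into
`T⁻`.
-/

lemma Int.add_le_apply_add_of_lt_succ {f : ℕ → ℤ} {e : ℕ} (hf : ∀ k < e, f k < f (k + 1))
    {k d : ℕ} (h : k + d ≤ e) : f k + d ≤ f (k + d) := by
  induction d with
  | zero => simp
  | succ d ih =>
    have := hf (k + d) (by omega)
    show f k + ((d + 1 : ℕ) : ℤ) ≤ f (k + d + 1)
    push_cast
    linarith [ih (by omega)]

namespace MonId

variable {M : Set Mon} {e : ℕ} {m : ℕ → Mon}

lemma IsMonIdeal.isUpperSet (hM : IsMonIdeal M) : IsUpperSet M := by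
  rintro ⟨a, b⟩ ⟨c, d⟩ ⟨hac, hbd⟩ hp
  have hrow : ∀ c', a ≤ c' → ((c', b) : Mon) ∈ M :=
    Int.leInduction hp fun _ _ ih => (hM.2.1 _ ih).1
  exact Int.leInduction (hrow c hac) (fun _ _ ih => (hM.2.1 _ ih).2) d hbd

lemma IsMonIdeal.swap (hM : IsMonIdeal M) : IsMonIdeal (Prod.swap ⁻¹' M) :=
  ⟨fun _ hp => (hM.1 _ hp).symm, fun _ hp => (hM.2.1 _ hp).symm,
    (hM.2.2.preimage Prod.swap_injective.injOn).subset fun _ hp => ⟨hp.1.symm, hp.2⟩⟩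

lemma IsMonIdeal.exists_mem_row (hM : IsMonIdeal M) (β : ℤ) (hβ : 0 ≤ β) :
    ∃ α : ℕ, ((α : ℤ), β) ∈ M := by
  by_contra! h
  exact Set.infinite_of_injective_forall_mem (s := {p : Mon | inS p ∧ p ∉ M})
    (f := fun α : ℕ => ((α : ℤ), β)) (fun _ _ h => by simpa using h)
    (fun α => ⟨⟨α.cast_nonneg, hβ⟩, h α⟩) hM.2.2

namespace IsGenSeq

lemma exists_le_of_mem (hM : IsMonIdeal M) (hg : IsGenSeq M e m) {p : Mon} (hp : p ∈ M) :
    ∃ k ≤ e, m k ≤ p := by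
  have hfin : {q | q ∈ M ∧ q ≤ p}.Finite :=
    (Set.finite_Icc 0 p).subset fun q hq => ⟨hM.1 q hq.1, hq.2⟩
  obtain ⟨q, hqp, hq_min⟩ := hfin.exists_le_minimal ⟨hp, le_rfl⟩
  have hgen : IsMinGen M q := by
    refine ⟨hq_min.prop.1, fun hq' => ?_, fun hq' => ?_⟩
    · have hle : ((q.1 - 1, q.2) : Mon) ≤ q := Prod.le_def.2 ⟨by omega, le_rfl⟩
      have := Prod.le_def.1 (hq_min.le_of_le ⟨hq', hle.trans hqp⟩ hle)
      omega
    · have hle : ((q.1, q.2 - 1) : Mon) ≤ q := Prod.le_def.2 ⟨le_rfl, by omega⟩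
      have := Prod.le_def.1 (hq_min.le_of_le ⟨hq', hle.trans hqp⟩ hle)
      omega
  obtain ⟨k, hk, rfl⟩ := hg.2.2 q hgen
  exact ⟨k, hk, hqp⟩

lemma alpha_lt (hM : IsMonIdeal M) (hg : IsGenSeq M e m) {k : ℕ} (hk : k < e) :
    (m (k + 1)).1 < (m k).1 := by
  by_contra! h
  exact (hg.1 (k + 1) hk).2.2 <|
    hM.isUpperSet ⟨h, by linarith [hg.2.1 k hk]⟩ (hg.1 k hk.le).1

lemma beta_strictMonoOn (hg : IsGenSeq M e m) : StrictMonoOn (fun k => (m k).2) (Set.Iic e) :=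
  strictMonoOn_Iic_of_lt_succ (by simpa using hg.2.1)

lemma alpha_strictAntiOn (hM : IsMonIdeal M) (hg : IsGenSeq M e m) :
    StrictAntiOn (fun k => (m k).1) (Set.Iic e) :=
  strictAntiOn_Iic_of_succ_lt (by simpa using fun k => hg.alpha_lt hM (k := k))

lemma alpha_add_le (hM : IsMonIdeal M) (hg : IsGenSeq M e m) {k d : ℕ} (h : k + d ≤ e) :
    (m (k + d)).1 + d ≤ (m k).1 := by
  have := Int.add_le_apply_add_of_lt_succ (f := fun k => -(m k).1)
    (fun k hk => neg_lt_neg (hg.alpha_lt hM hk)) h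
  linarith

lemma swap (hM : IsMonIdeal M) (hg : IsGenSeq M e m) :
    IsGenSeq (Prod.swap ⁻¹' M) e (fun k => (m (e - k)).swap) := by
  refine ⟨fun k hk => ?_, fun k hk => ?_, fun p hp => ?_⟩
  · obtain ⟨hmem, hx, hy⟩ := hg.1 (e - k) (Nat.sub_le e k)
    exact ⟨hmem, hy, hx⟩
  · have := hg.alpha_lt hM (k := e - (k + 1)) (by omega)
    rwa [show e - (k + 1) + 1 = e - k by omega] at this
  · obtain ⟨k, hk, hkp⟩ := hg.2.2 p.swap ⟨hp.1, hp.2.2, hp.2.1⟩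
    exact ⟨e - k, Nat.sub_le e k, by simp [Nat.sub_sub_self hk, hkp]⟩

lemma beta_zero (hM : IsMonIdeal M) (hg : IsGenSeq M e m) : (m 0).2 = 0 := by
  obtain ⟨α, hα⟩ := hM.exists_mem_row 0 le_rfl
  obtain ⟨k, hk, -, hk0⟩ := hg.exists_le_of_mem hM hα
  have h0k : (m 0).2 ≤ (m k).2 :=
    (hg.beta_strictMonoOn.le_iff_le (Set.mem_Iic.2 (Nat.zero_le e)) hk).2 (Nat.zero_le k)
  linarith [(hM.1 _ (hg.1 0 (Nat.zero_le e)).1).2]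

lemma alpha_last (hM : IsMonIdeal M) (hg : IsGenSeq M e m) : (m e).1 = 0 := by
  simpa using (hg.swap hM).beta_zero hM.swap

lemma mem_iff_alpha_le (hM : IsMonIdeal M) (hg : IsGenSeq M e m) {i : ℕ} (hi : i ≤ e)
    {p : Mon} (hip : (m i).2 ≤ p.2) (hlast : ∀ j ≤ e, (m j).2 ≤ p.2 → j ≤ i) :
    p ∈ M ↔ (m i).1 ≤ p.1 := by
  refine ⟨fun hp => ?_, fun hip' => hM.isUpperSet ⟨hip', hip⟩ (hg.1 i hi).1⟩
  obtain ⟨j, hj, hjp⟩ := hg.exists_le_of_mem hM hp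
  have hij : (m i).1 ≤ (m j).1 :=
    ((hg.alpha_strictAntiOn hM).le_iff_ge hi hj).2 (hlast j hj hjp.2)
  exact hij.trans hjp.1

lemma alpha_pos (hM : IsMonIdeal M) (hg : IsGenSeq M e m) {i : ℕ} (hi : i < e) : 0 < (m i).1 := by
  simpa [hg.alpha_last hM] using hg.alpha_strictAntiOn hM hi.le (Set.mem_Iic.2 le_rfl) hi

lemma le_of_beta_lt_succ (hg : IsGenSeq M e m) {i j : ℕ} (hi : i < e) (hj : j ≤ e)
    (h : (m j).2 < (m (i + 1)).2) : j ≤ i :=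
  Nat.lt_succ_iff.1 <| (hg.beta_strictMonoOn.lt_iff_lt hj (show i + 1 ∈ Set.Iic e from hi)).1 h

lemma beta_eq_self_of_le_add_one (hM : IsMonIdeal M) (hg : IsGenSeq M e m)
    (h : ∀ i < e, (m (i + 1)).2 ≤ (m i).2 + 1) : ∀ k ≤ e, (m k).2 = k := by
  intro k hk
  induction k with
  | zero => exact hg.beta_zero hM
  | succ k ih =>
    have := hg.2.1 k (by omega)
    have := h k (by omega)
    have := ih (by omega)
    push_cast
    omega

lemma exists_beta_gap (hM : IsMonIdeal M) (hg : IsGenSeq M e m)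
    (h : ¬ ∀ k ≤ e, (m k).2 = k) : ∃ i < e, (m i).2 + 2 ≤ (m (i + 1)).2 := by
  contrapose! h
  exact hg.beta_eq_self_of_le_add_one hM fun i hi => by linarith [h i hi]

lemma w_succ (hM : IsMonIdeal M) (hg : IsGenSeq M e m) {i : ℕ} (hi : i < e) :
    w m (i + 1) = ((m i).1, (m (i + 1)).2) := by
  simp only [w, Nat.add_sub_cancel, max_eq_left (hg.alpha_lt hM hi).le,
    max_eq_right (hg.2.1 i hi).le]

lemma mem_tminus_of_beta_gap (hM : IsMonIdeal M) (hg : IsGenSeq M e m) {i : ℕ} (hi : i < e)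
    (hgap : (m i).2 + 2 ≤ (m (i + 1)).2) : (i, -1) ∈ Tminus 1 1 M e m := by
  have hα := hg.alpha_pos hM hi
  have hβ := (hM.1 _ (hg.1 i hi.le).1).2
  refine ⟨hi, le_rfl, ⟨by simp only [rpow]; omega, by simp only [rpow]; omega⟩, ?_, ?_⟩
  · rw [hg.mem_iff_alpha_le hM hi.le (by simp only [rpow]; omega) fun j hj hjβ =>
      hg.le_of_beta_lt_succ hi hj (by simp only [rpow] at hjβ; omega)]
    simp only [rpow]
    omega
  · rw [hg.w_succ hM hi]
    exact hM.isUpperSet (Prod.le_def.2 ⟨by simp only [rpow]; linarith [hg.alpha_lt hM hi],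
      by simp only [rpow]; omega⟩) (hg.1 (i + 1) hi).1

lemma tminus_eq_empty_of_beta_eq (hM : IsMonIdeal M) (hg : IsGenSeq M e m)
    (hB : ∀ k ≤ e, (m k).2 = k) : Tminus 1 1 M e m = ∅ := by
  refine Set.eq_empty_iff_forall_notMem.2 fun ⟨i, ℓ⟩ ⟨hi, hℓ, hS, hnot, _⟩ => hnot ?_
  simp only [rpow, one_mul, inS] at hS ⊢
  have hBi := hB i hi.le
  rw [hg.mem_iff_alpha_le hM (min_le_right (i + (-ℓ).toNat) e)
    (by rw [hB _ (min_le_right _ _)]; omega) fun j hj hjβ => by rw [hB j hj] at hjβ; omega]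
  rcases le_total (i + (-ℓ).toNat) e with h | h
  · rw [min_eq_left h]
    have := hg.alpha_add_le hM h
    omega
  · rw [min_eq_right h, hg.alpha_last hM]
    exact hS.1

lemma tminus_eq_empty_iff (hM : IsMonIdeal M) (hg : IsGenSeq M e m) :
    Tminus 1 1 M e m = ∅ ↔ ∀ k ≤ e, (m k).2 = k := by
  refine ⟨fun h => by_contra fun hB => ?_, hg.tminus_eq_empty_of_beta_eq hM⟩
  obtain ⟨i, hi, hgap⟩ := hg.exists_beta_gap hM hB
  simpa [h] using hg.mem_tminus_of_beta_gap hM hi hgap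

lemma rowLen_eq (hM : IsMonIdeal M) (hg : IsGenSeq M e m) {β i : ℕ} (hi : i ≤ e)
    (hiβ : (m i).2 ≤ β) (hlast : ∀ j ≤ e, (m j).2 ≤ β → j ≤ i) :
    rowLen M β = (m i).1.toNat := by
  have hrow : {α : ℤ // 0 ≤ α ∧ (α, (β : ℤ)) ∉ M} ≃ Set.Ico 0 (m i).1 :=
    Equiv.subtypeEquivRight fun α => by
      rw [hg.mem_iff_alpha_le hM hi hiβ hlast]
      simp [Set.mem_Ico]
  rw [rowLen, Nat.card_congr hrow]
  simp

lemma rowLen_strictAnti_iff (hM : IsMonIdeal M) (hg : IsGenSeq M e m) :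
    (∀ β : ℕ, 0 < rowLen M (β + 1) → rowLen M (β + 1) < rowLen M β) ↔
      ∀ k ≤ e, (m k).2 = k := by
  constructor
  · refine fun hrow => by_contra fun hB => ?_
    obtain ⟨i, hi, hgap⟩ := hg.exists_beta_gap hM hB
    obtain ⟨β, hβ⟩ : ∃ β : ℕ, (m i).2 = β := ⟨(m i).2.toNat, by
      have := (hM.1 _ (hg.1 i hi.le).1).2; omega⟩
    have hlast (γ : ℤ) (hγ : γ < (m (i + 1)).2) : ∀ j ≤ e, (m j).2 ≤ γ → j ≤ i :=
      fun j hj hjγ => hg.le_of_beta_lt_succ hi hj (by omega)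
    have h0 := hg.rowLen_eq hM hi.le hβ.le (hlast β (by omega))
    have h1 := hg.rowLen_eq hM hi.le (by push_cast; omega) (hlast (β + 1 : ℕ) (by omega))
    have := hrow β (by have := hg.alpha_pos hM hi; omega)
    omega
  · intro hB β hpos
    have hrow (γ : ℕ) : rowLen M γ = (m (min γ e)).1.toNat :=
      hg.rowLen_eq hM (min_le_right γ e) (by rw [hB _ (min_le_right γ e)]; omega)
        fun j hj hjγ => by rw [hB j hj] at hjγ; omega
    rw [hrow] at hpos ⊢
    rw [hrow]
    rcases lt_or_ge (β + 1) e with h | h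
    · rw [min_eq_left h.le] at hpos ⊢
      rw [min_eq_left (by omega : β ≤ e)]
      have := hg.alpha_lt hM (k := β) (by omega)
      omega
    · rw [min_eq_right h, hg.alpha_last hM] at hpos
      exact absurd hpos (by simp)

lemma w_eq_y_mul_iff (hM : IsMonIdeal M) (hg : IsGenSeq M e m) :
    (∀ k : ℕ, 1 ≤ k → k ≤ e → w m k = ((m (k - 1)).1, (m (k - 1)).2 + 1)) ↔
      ∀ k ≤ e, (m k).2 = k := by
  constructor
  · refine fun hw => hg.beta_eq_self_of_le_add_one hM fun i hi => ?_
    have := hw (i + 1) (by omega) hi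
    rw [hg.w_succ hM hi] at this
    simp_all
  · intro hB k hk1 hke
    obtain ⟨i, rfl⟩ : ∃ i, k = i + 1 := ⟨k - 1, by omega⟩
    rw [hg.w_succ hM hke, Nat.add_sub_cancel, hB i (by omega), hB (i + 1) hke]
    push_cast
    rfl

end IsGenSeq

lemma rpow_neg_swap (a b ℓ : ℤ) (p : Mon) : rpow a b (-ℓ) p.swap = (rpow b a ℓ p).swap := by
  simp only [rpow, Prod.fst_swap, Prod.snd_swap, Prod.swap_prod_mk, Prod.mk.injEq]
  constructor <;> ring

lemma w_reverse_swap (m : ℕ → Mon) {e i : ℕ} (hi : 1 ≤ i) (hie : i ≤ e) :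
    w (fun k => (m (e - k)).swap) (e - i + 1) = (w m i).swap := by
  simp only [w, Prod.fst_swap, Prod.snd_swap, Prod.swap_prod_mk, Nat.add_sub_cancel,
    show e - (e - i + 1) = i - 1 by omega, Nat.sub_sub_self hie, max_comm]

lemma mem_tplus_iff_mem_tminus_swap (a b : ℤ) (m : ℕ → Mon) {i : ℕ} (hi : 1 ≤ i) (hie : i ≤ e)
    (ℓ : ℤ) : (i, ℓ) ∈ Tplus a b M e m ↔
      (e - i, -ℓ) ∈ Tminus b a (Prod.swap ⁻¹' M) e (fun k => (m (e - k)).swap) := by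
  simp only [Tplus, Tminus, Set.mem_ofPred_eq, Set.mem_preimage, Nat.sub_sub_self hie,
    rpow_neg_swap, w_reverse_swap m hi hie, Prod.swap_swap, inS, Prod.fst_swap, Prod.snd_swap]
  constructor
  · rintro ⟨-, -, hℓ, ⟨h1, h2⟩, h3, h4⟩
    exact ⟨by omega, by omega, ⟨h2, h1⟩, h3, h4⟩
  · rintro ⟨-, hℓ, ⟨h1, h2⟩, h3, h4⟩
    exact ⟨hi, hie, by omega, ⟨h2, h1⟩, h3, h4⟩

lemma tplus_eq_empty_iff_tminus_swap (a b : ℤ) (m : ℕ → Mon) :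
    Tplus a b M e m = ∅ ↔ Tminus b a (Prod.swap ⁻¹' M) e (fun k => (m (e - k)).swap) = ∅ := by
  simp only [Set.eq_empty_iff_forall_notMem, Prod.forall]
  constructor
  · intro h j ℓ hj
    have hje : j < e := hj.1
    refine h (e - j) (-ℓ) ((mem_tplus_iff_mem_tminus_swap a b m (by omega) (by omega) _).2 ?_)
    simpa [Nat.sub_sub_self hje.le] using hj
  · intro h i ℓ hi
    exact h _ _ ((mem_tplus_iff_mem_tminus_swap a b m hi.1 hi.2.1 ℓ).1 hi)

lemma colLen_eq_rowLen_swap : colLen M = rowLen (Prod.swap ⁻¹' M) := rfl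

lemma alpha_eq_iff_beta_reverse_swap (m : ℕ → Mon) :
    (∀ k ≤ e, (m k).1 = ((e - k : ℕ) : ℤ)) ↔ ∀ k ≤ e, ((m (e - k)).swap).2 = k := by
  refine ⟨fun h k hk => ?_, fun h k hk => ?_⟩ <;>
    simpa [Nat.sub_sub_self hk] using h (e - k) (Nat.sub_le e k)

end MonId

/-- In the standard grading, with minimal generators
`m_k = x^{α_k} y^{β_k}`: `T⁻(M) = ∅` iff `β_k = k` for all `0 ≤ k ≤ e`,
iff the row lengths of the Young diagram of `M` are strictly decreasing,
iff `w_k = y·m_{k-1}` for `1 ≤ k ≤ e`; dually, `T⁺(M) = ∅` iff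
`α_k = e - k` for all `0 ≤ k ≤ e`, iff the column lengths of the Young
diagram of `M` are strictly decreasing. -/
theorem lexLeast_lexMost_characterizations
    (M : Set Mon) (hM : IsMonIdeal M) (e : ℕ) (m : ℕ → Mon)
    (hg : IsGenSeq M e m) :
    ((Tminus 1 1 M e m = ∅) ↔ (∀ k ≤ e, (m k).2 = (k : ℤ))) ∧
    ((Tminus 1 1 M e m = ∅) ↔
      (∀ β : ℕ, 0 < rowLen M (β + 1) → rowLen M (β + 1) < rowLen M β)) ∧
    ((Tminus 1 1 M e m = ∅) ↔
      (∀ k : ℕ, 1 ≤ k → k ≤ e → w m k = ((m (k - 1)).1, (m (k - 1)).2 + 1))) ∧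
    ((Tplus 1 1 M e m = ∅) ↔ (∀ k ≤ e, (m k).1 = ((e - k : ℕ) : ℤ))) ∧
    ((Tplus 1 1 M e m = ∅) ↔
      (∀ α : ℕ, 0 < colLen M (α + 1) → colLen M (α + 1) < colLen M α)) := by
  have hminus := hg.tminus_eq_empty_iff hM
  have hplus := tplus_eq_empty_iff_tminus_swap 1 1 m |>.trans <|
    (hg.swap hM).tminus_eq_empty_iff hM.swap
  refine ⟨hminus, hminus.trans (hg.rowLen_strictAnti_iff hM).symm,
    hminus.trans (hg.w_eq_y_mul_iff hM).symm,
    hplus.trans (alpha_eq_iff_beta_reverse_swap m).symm, ?_⟩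
  rw [colLen_eq_rowLen_swap]
  exact hplus.trans ((hg.swap hM).rowLen_strictAnti_iff hM.swap).symm
end
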